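/- Let n, k be positive integers and 0 < p < 1 with k < p·n, and set f = k/n. Then B_{n,k}(p) < B↑_{n,k}(p) < (√(1-f)·p/(√(2π·f)·(p-f)))·e^{-n·D(f‖p)}. -/

import Mathlib

open Real

/-- Binomial probability `b_{n,k}(p)`. -/
noncomputable def b (n k : ℕ) (p : ℝ) : ℝ :=
  (n.choose k : ℝ) * p ^ k * (1 - p) ^ (n - k)

/-- Lower tail probability `B_{n,k}(p)`. -/
noncomputable def B (n k : ℕ) (p : ℝ) : ℝ :=
  ∑ j ∈ Finset.range (k + 1), (n.choose j : ℝ) * p ^ j * (1 - p) ^ (n - j)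

/-- Relative entropy `D(f‖p)`. -/
noncomputable def D (f p : ℝ) : ℝ :=
  f * Real.log (f / p) + (1 - f) * Real.log ((1 - f) / (1 - p))

noncomputable def V (n k p a : ℝ) : ℝ :=
  a + p * (n - k + a + 1) / (p * n + p - k + a)

noncomputable def U (n k p : ℝ) : ℝ := ⨅ a : ℕ, V n k p (a : ℝ)

/-- The upper bound `B↑_{n,k}(p)`. -/
noncomputable def Bup (n k : ℕ) (p : ℝ) : ℝ :=
  Real.sqrt n * U n k p / Real.sqrt (2 * Real.pi * k * ((n : ℝ) - k)) *
    Real.exp (-(n * D ((k : ℝ) / n) p)) *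
    Real.exp (1 / (12 * n + 1) - 1 / (12 * k + 1) - 1 / (12 * ((n : ℝ) - k) + 1))

/-!
Write `B_{n,k}(p) = ∑_{j ≤ k} b_{n,j}(p)`. As `k < pn`, the terms increase up to `j = k`, and the
ratio `b_{n,j} / b_{n,j+1} = (j+1)q / ((n-j)p)` increases with `j`. For `a < k` and `c = k - a`
the terms `j ≤ c` are therefore dominated by a geometric series of ratio `cq / ((n-c+1)p)` ending
at `b_{n,c} ≤ b_{n,k}`, so they sum to less than `b_{n,k} (V(n,k,p,a) - a)`, while each of the
remaining `a` terms is at most `b_{n,k}`; for `a ≥ k` simply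
`B_{n,k} < (k+1) b_{n,k} ≤ V(n,k,p,a) b_{n,k}`. As `V(n,k,p,a) ≥ a`, the infimum `U` is
attained, so `B_{n,k}(p) < b_{n,k}(p) U(n,k,p)`.

Robbins' form of Stirling's formula, `m! = √(2πm) (m/e)^m e^{r_m}` with `r_m - 1/(12m+1)`
decreasing to `0`, bounds `b_{n,k}(p)` by the remaining factors of `B↑_{n,k}(p)`, since
`e^{-n D(k/n‖p)} = (np/k)^k (nq/(n-k))^{n-k}`. For the second inequality the Robbins correction
is negative and `U ≤ V(n,k,p,0) < p(n-k)/(pn-k)`.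
-/

open Stirling Filter Topology

noncomputable def stirlingRemainder (n : ℕ) : ℝ := log (stirlingSeq n) - log √π

noncomputable def stirlingCorrection (n k : ℝ) : ℝ :=
  1 / (12 * n + 1) - 1 / (12 * k + 1) - 1 / (12 * (n - k) + 1)

lemma factorial_eq_stirling_mul_exp_stirlingRemainder {n : ℕ} (hn : n ≠ 0) :
    (n.factorial : ℝ) = √(2 * π * n) * (n / exp 1) ^ n * exp (stirlingRemainder n) := by
  have hs : 0 < stirlingSeq n := (sqrt_pos.2 pi_pos).trans_le (sqrt_pi_le_stirlingSeq hn)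
  rw [stirlingRemainder, exp_sub, exp_log hs, exp_log (by positivity), stirlingSeq,
    mul_right_comm, sqrt_mul (by positivity), sqrt_mul zero_le_two, sqrt_mul zero_le_two]
  field_simp

lemma one_div_sub_le_stirlingRemainder_sub {n : ℕ} (hn : n ≠ 0) :
    1 / (12 * (n : ℝ) + 1) - 1 / (12 * (n + 1 : ℝ) + 1) ≤
      stirlingRemainder n - stirlingRemainder (n + 1) := by
  obtain ⟨m, rfl⟩ := Nat.exists_eq_add_one_of_ne_zero hn
  have hfirst := le_hasSum (log_stirlingSeq_sdiff_hasSum m) 0 (fun j _ => by positivity)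
  simp only [stirlingRemainder, sub_sub_sub_cancel_right]
  refine le_trans ?_ hfirst
  push_cast
  rw [div_sub_div _ _ (by positivity) (by positivity), div_le_iff₀ (by positivity)]
  field_simp
  nlinarith [(Nat.cast_nonneg m : (0:ℝ) ≤ m)]

lemma antitone_stirlingRemainder_sub :
    Antitone fun m : ℕ => stirlingRemainder (m + 1) - 1 / (12 * (m + 1 : ℝ) + 1) :=
  antitone_nat_of_succ_le fun m => by
    have := one_div_sub_le_stirlingRemainder_sub (Nat.succ_ne_zero m)
    push_cast at this ⊢
    linarith

lemma tendsto_stirlingRemainder_sub :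
    Tendsto (fun m : ℕ => stirlingRemainder (m + 1) - 1 / (12 * (m + 1 : ℝ) + 1))
      atTop (𝓝 0) := by
  have hρ : Tendsto stirlingRemainder atTop (𝓝 0) := by
    convert ((continuousAt_log (by positivity)).tendsto.comp
      tendsto_stirlingSeq_sqrt_pi).sub_const (log √π) using 2
    · rfl
    · simp
  have hc : Tendsto (fun n : ℕ => 1 / (12 * (n : ℝ) + 1)) atTop (𝓝 0) :=
    tendsto_const_nhds.div_atTop <| tendsto_atTop_add_const_right _ 1 <|
      tendsto_natCast_atTop_atTop.const_mul_atTop (by norm_num)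
  simpa [Function.comp_def] using (hρ.sub hc).comp (tendsto_add_atTop_nat 1)

lemma stirlingRemainder_add_sub_le {k m : ℕ} (hk : k ≠ 0) (hm : m ≠ 0) :
    stirlingRemainder (k + m) - stirlingRemainder k - stirlingRemainder m ≤
      stirlingCorrection (k + m) k := by
  obtain ⟨k, rfl⟩ := Nat.exists_eq_add_one_of_ne_zero hk
  obtain ⟨m, rfl⟩ := Nat.exists_eq_add_one_of_ne_zero hm
  have hkm := antitone_stirlingRemainder_sub (show k ≤ k + m + 1 by omega)
  have hm0 := antitone_stirlingRemainder_sub.le_of_tendsto tendsto_stirlingRemainder_sub m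
  simp only [show k + m + 1 + 1 = k + 1 + (m + 1) by omega] at hkm
  simp only [stirlingCorrection]
  push_cast at hkm hm0 ⊢
  ring_nf at hkm hm0 ⊢
  linarith

lemma stirlingCorrection_neg {n k : ℝ} (hk : 0 ≤ k) (hkn : k ≤ n) :
    stirlingCorrection n k < 0 := by
  have h1 : 1 / (12 * n + 1) ≤ 1 / (12 * k + 1) :=
    one_div_le_one_div_of_le (by positivity) (by linarith)
  have h2 : 0 < 1 / (12 * (n - k) + 1) := by
    have : 0 ≤ n - k := sub_nonneg.2 hkn
    positivity
  rw [stirlingCorrection]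
  linarith

lemma exp_neg_mul_D {k m : ℕ} (hk : k ≠ 0) (hm : m ≠ 0) {p : ℝ} (hp0 : 0 < p) (hp1 : p < 1) :
    exp (-((k + m : ℝ) * D (k / (k + m)) p)) =
      ((k + m) * p / k) ^ k * ((k + m) * (1 - p) / m) ^ m := by
  have hk' : (0 : ℝ) < k := by positivity
  have hm' : (0 : ℝ) < m := by positivity
  have hq : 0 < 1 - p := by linarith
  have hD : -((k + m : ℝ) * D (k / (k + m)) p) =
      k * log ((k + m) * p / k) + m * log ((k + m) * (1 - p) / m) := by
    have h1 : (1 : ℝ) - k / (k + m) = ((k + m) * (1 - p) / m)⁻¹ * (1 - p) := by field_simp; ring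
    have h2 : (k : ℝ) / (k + m) = ((k + m) * p / k)⁻¹ * p := by field_simp
    rw [D, h1, h2, mul_div_cancel_right₀ _ hp0.ne', mul_div_cancel_right₀ _ hq.ne', log_inv,
      log_inv]
    field_simp
    ring
  rw [hD, exp_add, exp_nat_mul, exp_nat_mul, exp_log (by positivity), exp_log (by positivity)]

lemma b_add_eq_mul_exp_stirlingRemainder {k m : ℕ} (hk : k ≠ 0) (hm : m ≠ 0) {p : ℝ}
    (hp0 : 0 < p) (hp1 : p < 1) :
    b (k + m) k p = √(k + m) / √(2 * π * k * m) * exp (-((k + m : ℝ) * D (k / (k + m)) p)) *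
      exp (stirlingRemainder (k + m) - stirlingRemainder k - stirlingRemainder m) := by
  have hk' : (0 : ℝ) < k := by positivity
  have hm' : (0 : ℝ) < m := by positivity
  have h2π : (0 : ℝ) ≤ 2 * π := by positivity
  rw [b, Nat.cast_add_choose, Nat.add_sub_cancel_left, exp_neg_mul_D hk hm hp0 hp1,
    factorial_eq_stirling_mul_exp_stirlingRemainder (by omega),
    factorial_eq_stirling_mul_exp_stirlingRemainder hk,
    factorial_eq_stirling_mul_exp_stirlingRemainder hm, exp_sub, exp_sub]
  push_cast
  rw [sqrt_mul (mul_nonneg h2π hk'.le), sqrt_mul h2π, sqrt_mul h2π, sqrt_mul h2π]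
  simp only [div_pow, mul_pow, pow_add]
  field_simp

lemma b_le_stirling_bound {n k : ℕ} (hk : k ≠ 0) (hkn : k < n) {p : ℝ} (hp0 : 0 < p)
    (hp1 : p < 1) :
    b n k p ≤ √n / √(2 * π * k * (n - k)) * exp (-(n * D (k / n) p)) *
      exp (stirlingCorrection n k) := by
  obtain ⟨m, rfl⟩ := Nat.exists_eq_add_of_lt hkn
  rw [add_assoc, b_add_eq_mul_exp_stirlingRemainder hk m.succ_ne_zero hp0 hp1]
  push_cast
  rw [add_sub_cancel_left]
  gcongr
  exact_mod_cast stirlingRemainder_add_sub_le hk m.succ_ne_zero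

lemma sum_range_succ_le_mul_geom_sum {R : Type*} [CommSemiring R] [PartialOrder R]
    [IsOrderedRing R] {x : ℕ → R} {r : R} (hr : 0 ≤ r) {c : ℕ}
    (hx : ∀ j < c, x j ≤ r * x (j + 1)) :
    ∑ j ∈ Finset.range (c + 1), x j ≤ x c * ∑ i ∈ Finset.range (c + 1), r ^ i := by
  induction c with
  | zero => simp
  | succ c ih =>
    have hgeom : 0 ≤ ∑ i ∈ Finset.range (c + 1), r ^ i :=
      Finset.sum_nonneg fun i _ => pow_nonneg hr i
    calc ∑ j ∈ Finset.range (c + 1 + 1), x j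
        = ∑ j ∈ Finset.range (c + 1), x j + x (c + 1) := Finset.sum_range_succ _ _
      _ ≤ r * x (c + 1) * ∑ i ∈ Finset.range (c + 1), r ^ i + x (c + 1) := by
        gcongr
        exact (ih fun j hj => hx j (hj.trans c.lt_succ_self)).trans
          (mul_le_mul_of_nonneg_right (hx c c.lt_succ_self) hgeom)
      _ = x (c + 1) * ∑ i ∈ Finset.range (c + 1 + 1), r ^ i := by
        rw [geom_sum_succ (n := c + 1)]; ring

section Binomial

variable {n k : ℕ} {p : ℝ}

lemma b_pos (hp0 : 0 < p) (hp1 : p < 1) {j : ℕ} (hj : j ≤ n) : 0 < b n j p := by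
  have : (0 : ℝ) < n.choose j := by exact_mod_cast Nat.choose_pos hj
  have : 0 < 1 - p := by linarith
  unfold b
  positivity

lemma b_succ_mul_eq {j : ℕ} (hj : j < n) :
    b n (j + 1) p * ((1 - p) * (j + 1)) = b n j p * (p * (n - j)) := by
  have hchoose : (n.choose (j + 1) : ℝ) * (j + 1) = n.choose j * (n - j) := by
    have h := congrArg (Nat.cast : ℕ → ℝ) (Nat.choose_succ_right_eq n j)
    push_cast [Nat.cast_sub hj.le] at h
    exact h
  rw [b, b, show n - j = n - (j + 1) + 1 by omega, pow_succ, pow_succ]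
  linear_combination (p ^ j * (1 - p) ^ (n - (j + 1)) * (1 - p) * p) * hchoose

lemma b_le_mul_b_succ (hp0 : 0 < p) (hp1 : p < 1) {j c : ℕ} (hjc : j < c) (hcn : c ≤ n) :
    b n j p ≤ c * (1 - p) / ((n - c + 1) * p) * b n (j + 1) p := by
  have hq : 0 < 1 - p := by linarith
  have hjc' : (j : ℝ) + 1 ≤ c := by exact_mod_cast hjc
  have hcn' : (c : ℝ) ≤ n := by exact_mod_cast hcn
  have hb : 0 < b n (j + 1) p := b_pos hp0 hp1 (by omega)
  have hnj : (0 : ℝ) < p * (n - j) := mul_pos hp0 (by linarith)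
  have hbj : b n j p = (1 - p) * (j + 1) / (p * (n - j)) * b n (j + 1) p := by
    rw [div_mul_eq_mul_div, eq_div_iff hnj.ne', ← b_succ_mul_eq (show j < n by omega)]
    ring
  rw [hbj]
  refine mul_le_mul_of_nonneg_right ?_ hb.le
  rw [div_le_div_iff₀ hnj (by nlinarith)]
  nlinarith [mul_nonneg (mul_nonneg hq.le hp0.le)
    (mul_nonneg (sub_nonneg.2 hjc') (by positivity : (0 : ℝ) ≤ n + 1))]

lemma lt_of_natCast_lt_mul_of_lt_one (hp1 : p < 1) (hkp : (k : ℝ) < p * n) : k < n := by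
  have : p * n ≤ n := mul_le_of_le_one_left (Nat.cast_nonneg n) hp1.le
  exact_mod_cast hkp.trans_le this

variable (hp0 : 0 < p) (hp1 : p < 1) (hkp : (k : ℝ) < p * n)
include hp0 hp1 hkp

lemma b_lt_b_succ_of_lt {j : ℕ} (hj : j < k) : b n j p < b n (j + 1) p := by
  have hjk : (j : ℝ) + 1 ≤ k := by exact_mod_cast hj
  have hjn : j < n := hj.trans (lt_of_natCast_lt_mul_of_lt_one hp1 hkp)
  have hjn' : (j : ℝ) < n := by exact_mod_cast hjn
  have hq : 0 < (1 - p) * (j + 1) := by nlinarith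
  refine lt_of_mul_lt_mul_right ?_ hq.le
  rw [b_succ_mul_eq hjn]
  exact mul_lt_mul_of_pos_left (by nlinarith) (b_pos hp0 hp1 hjn.le)

lemma strictMonoOn_b : StrictMonoOn (fun j => b n j p) (Set.Iic k) :=
  strictMonoOn_Iic_of_lt_succ fun j hj => by
    simpa using b_lt_b_succ_of_lt hp0 hp1 hkp hj

lemma sum_range_succ_b_lt {c : ℕ} (hc : 0 < c) (hck : c ≤ k) :
    ∑ j ∈ Finset.range (c + 1), b n j p < b n c p * (p * (n - c + 1) / (p * n + p - c)) := by
  have hck' : (c : ℝ) ≤ k := by exact_mod_cast hck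
  have hc' : (0 : ℝ) < c := by exact_mod_cast hc
  have hcn' : (c : ℝ) ≤ n := by nlinarith
  have hcn : c ≤ n := by exact_mod_cast hcn'
  set r : ℝ := c * (1 - p) / ((n - c + 1) * p) with hr
  have hden : 0 < (n - c + 1) * p := mul_pos (by linarith) hp0
  have hr0 : 0 < r := div_pos (mul_pos hc' (by linarith)) hden
  have hr1 : r < 1 := by rw [div_lt_one hden]; nlinarith
  have hinv : (1 - r)⁻¹ = p * (n - c + 1) / (p * n + p - c) := by
    rw [hr, one_sub_div hden.ne', inv_div]
    ring_nf
  have hgeom : ∑ i ∈ Finset.range (c + 1), r ^ i < (1 - r)⁻¹ := by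
    rw [← one_div, lt_div_iff₀ (by linarith)]
    nlinarith [geom_sum_mul r (c + 1), pow_pos hr0 (c + 1)]
  calc ∑ j ∈ Finset.range (c + 1), b n j p
      ≤ b n c p * ∑ i ∈ Finset.range (c + 1), r ^ i :=
        sum_range_succ_le_mul_geom_sum hr0.le fun j hj => b_le_mul_b_succ hp0 hp1 hj hcn
    _ < b n c p * (1 - r)⁻¹ :=
        mul_lt_mul_of_pos_left hgeom (b_pos hp0 hp1 hcn)
    _ = b n c p * (p * (n - c + 1) / (p * n + p - c)) := by rw [hinv]

lemma b_le_b_of_le {j : ℕ} (hj : j ≤ k) : b n j p ≤ b n k p :=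
  (strictMonoOn_b hp0 hp1 hkp).monotoneOn hj (le_refl k) hj

lemma natCast_le_V (a : ℕ) : (a : ℝ) ≤ V n k p a := by
  have hkn : (k : ℝ) < n := by nlinarith
  have ha : (0 : ℝ) ≤ a := Nat.cast_nonneg a
  have : 0 ≤ p * (n - k + a + 1) / (p * n + p - k + a) :=
    div_nonneg (mul_nonneg hp0.le (by linarith)) (by linarith)
  rw [V]
  linarith

lemma B_lt_b_mul_V_of_lt {a : ℕ} (hak : a < k) : B n k p < b n k p * V n k p a := by
  set c := k - a with hc
  have hcR : (c : ℝ) = k - a := by rw [hc, Nat.cast_sub hak.le]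
  have hfrac : 0 ≤ p * (n - c + 1) / (p * n + p - c) := by
    have : (c : ℝ) ≤ k := by rw [hcR]; linarith [(Nat.cast_nonneg a : (0 : ℝ) ≤ a)]
    exact div_nonneg (mul_nonneg hp0.le (by nlinarith)) (by nlinarith)
  have hhead : ∑ j ∈ Finset.range (c + 1), b n j p <
      b n k p * (p * (n - c + 1) / (p * n + p - c)) :=
    (sum_range_succ_b_lt hp0 hp1 hkp (by omega) (by omega)).trans_le
      (mul_le_mul_of_nonneg_right (b_le_b_of_le hp0 hp1 hkp (by omega)) hfrac)
  have htail : ∑ j ∈ Finset.Ico (c + 1) (k + 1), b n j p ≤ a * b n k p :=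
    calc ∑ j ∈ Finset.Ico (c + 1) (k + 1), b n j p
        ≤ ∑ _j ∈ Finset.Ico (c + 1) (k + 1), b n k p :=
          Finset.sum_le_sum fun j hj => b_le_b_of_le hp0 hp1 hkp (by simp at hj; omega)
      _ = a * b n k p := by simp [show k + 1 - (c + 1) = a by omega]
  calc B n k p
      = ∑ j ∈ Finset.range (c + 1), b n j p + ∑ j ∈ Finset.Ico (c + 1) (k + 1), b n j p :=
        (Finset.sum_range_add_sum_Ico _ (by omega)).symm
    _ < b n k p * (p * (n - c + 1) / (p * n + p - c)) + a * b n k p :=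
        add_lt_add_of_lt_of_le hhead htail
    _ = b n k p * V n k p a := by rw [V, hcR]; ring_nf

lemma B_lt_b_mul_V_of_le (hk : 0 < k) {a : ℕ} (hka : k ≤ a) : B n k p < b n k p * V n k p a := by
  have hkn : k ≤ n := (lt_of_natCast_lt_mul_of_lt_one hp1 hkp).le
  have hB : B n k p < (k + 1) * b n k p :=
    calc B n k p < ∑ _j ∈ Finset.range (k + 1), b n k p :=
          Finset.sum_lt_sum
            (fun j hj => b_le_b_of_le hp0 hp1 hkp (Finset.mem_range_succ_iff.1 hj))
            ⟨0, by simp, (strictMonoOn_b hp0 hp1 hkp) (Nat.zero_le k) (le_refl k) hk⟩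
      _ = (k + 1) * b n k p := by simp
  have hV : (k : ℝ) + 1 ≤ V n k p a := by
    rcases hka.eq_or_lt with rfl | hka
    · have : 0 < p * n + p := by positivity
      rw [V, div_eq_one_iff_eq (by linarith) |>.2 (by ring)]
    · exact (by exact_mod_cast hka : (k : ℝ) + 1 ≤ a).trans (natCast_le_V hp0 hp1 hkp a)
  calc B n k p < (k + 1) * b n k p := hB
    _ ≤ V n k p a * b n k p := mul_le_mul_of_nonneg_right hV (b_pos hp0 hp1 hkn).le
    _ = b n k p * V n k p a := mul_comm _ _

lemma B_lt_b_mul_U (hk : 0 < k) : B n k p < b n k p * U n k p := by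
  have htend : Tendsto (fun a : ℕ => V n k p a) cofinite atTop := by
    rw [Nat.cofinite_eq_atTop]
    exact tendsto_atTop_mono (natCast_le_V hp0 hp1 hkp) tendsto_natCast_atTop_atTop
  obtain ⟨a, ha⟩ := htend.exists_forall_le
  have hB : B n k p < b n k p * V n k p a := by
    rcases lt_or_ge a k with hak | hka
    · exact B_lt_b_mul_V_of_lt hp0 hp1 hkp hak
    · exact B_lt_b_mul_V_of_le hp0 hp1 hkp hk hka
  have hkn : k ≤ n := (lt_of_natCast_lt_mul_of_lt_one hp1 hkp).le
  exact hB.trans_le (mul_le_mul_of_nonneg_left (le_ciInf ha) (b_pos hp0 hp1 hkn).le)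

lemma U_nonneg : 0 ≤ U n k p :=
  le_ciInf fun a => (Nat.cast_nonneg a).trans (natCast_le_V hp0 hp1 hkp a)

lemma U_lt_div (hk : 0 < k) : U n k p < p * (n - k) / (p * n - k) := by
  have hk' : (0 : ℝ) < k := by exact_mod_cast hk
  have hV0 : V n k p (0 : ℕ) < p * (n - k) / (p * n - k) := by
    rw [V, Nat.cast_zero, zero_add, add_zero, add_zero,
      div_lt_div_iff₀ (by linarith) (by linarith)]
    nlinarith [mul_pos (mul_pos hp0 hk') (sub_pos.2 hp1)]
  refine lt_of_le_of_lt (ciInf_le ⟨0, ?_⟩ 0) hV0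
  rintro _ ⟨a, rfl⟩
  exact (Nat.cast_nonneg a).trans (natCast_le_V hp0 hp1 hkp a)

lemma U_mul_exp_stirlingCorrection_lt (hk : 0 < k) :
    U n k p * exp (stirlingCorrection n k) < √n * (p * (n - k) / (p * n - k)) := by
  have hkn : (k : ℝ) < n := by nlinarith
  have hfrac : 0 < p * (n - k) / (p * n - k) := div_pos (by nlinarith) (by linarith)
  have hsqrt : (1 : ℝ) ≤ √n := one_le_sqrt.2 (by linarith [(Nat.one_le_cast.2 hk : (1 : ℝ) ≤ k)])
  calc U n k p * exp (stirlingCorrection n k) ≤ U n k p :=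
        mul_le_of_le_one_right (U_nonneg hp0 hp1 hkp)
          (exp_le_one_iff.2 (stirlingCorrection_neg (Nat.cast_nonneg k) hkn.le).le)
    _ < p * (n - k) / (p * n - k) := U_lt_div hp0 hp1 hkp hk
    _ ≤ √n * (p * (n - k) / (p * n - k)) := le_mul_of_one_le_left hfrac.le hsqrt

end Binomial

lemma sqrt_one_sub_div_mul_div_eq {n k p : ℝ} (hk : 0 < k) (hkn : k < n) (hkp : k < p * n) :
    √(1 - k / n) * p / (√(2 * π * (k / n)) * (p - k / n)) =
      √n / √(2 * π * k * (n - k)) * (√n * (p * (n - k) / (p * n - k))) := by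
  have hn : 0 < n := hk.trans hkn
  have hnk : 0 < n - k := sub_pos.2 hkn
  rw [one_sub_div hn.ne', mul_div_assoc', sqrt_div hnk.le, sqrt_div (by positivity),
    sqrt_mul (by positivity) (n - k)]
  have : 0 < p * n - k := by linarith
  have : 0 < √(n - k) := sqrt_pos.2 hnk
  rw [sub_div' hn.ne']
  field_simp
  rw [sq_sqrt hnk.le, sq_sqrt hn.le]
  ring

theorem binomial_tail_upper_bound_asymptotic_general
    (n k : ℕ) (hk : 0 < k) (p : ℝ) (hp1 : p < 1)
    (hkp : (k : ℝ) < p * n) :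
    B n k p < Bup n k p ∧
    Bup n k p < Real.sqrt (1 - (k : ℝ) / n) * p /
        (Real.sqrt (2 * Real.pi * ((k : ℝ) / n)) * (p - (k : ℝ) / n)) *
        Real.exp (-(n * D ((k : ℝ) / n) p)) := by
  have hk' : (0 : ℝ) < k := by exact_mod_cast hk
  have hp0 : 0 < p := pos_of_mul_pos_left (hk'.trans hkp) (Nat.cast_nonneg n)
  have hkn : k < n := lt_of_natCast_lt_mul_of_lt_one hp1 hkp
  have hkn' : (k : ℝ) < n := by exact_mod_cast hkn
  set S := √n / √(2 * π * k * (n - k)) * exp (-(n * D (k / n) p)) with hS_def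
  have hS : 0 < S := mul_pos (div_pos (sqrt_pos.2 (hk'.trans hkn'))
    (sqrt_pos.2 (mul_pos (by positivity) (sub_pos.2 hkn')))) (exp_pos _)
  have hBup : Bup n k p = S * (U n k p * exp (stirlingCorrection n k)) := by
    rw [Bup, stirlingCorrection]; ring
  constructor
  · calc B n k p < b n k p * U n k p := B_lt_b_mul_U hp0 hp1 hkp hk
      _ ≤ S * exp (stirlingCorrection n k) * U n k p :=
        mul_le_mul_of_nonneg_right (b_le_stirling_bound hk.ne' hkn hp0 hp1)
          (U_nonneg hp0 hp1 hkp)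
      _ = Bup n k p := by rw [hBup]; ring
  · calc Bup n k p = S * (U n k p * exp (stirlingCorrection n k)) := hBup
      _ < S * (√n * (p * (n - k) / (p * n - k))) :=
        mul_lt_mul_of_pos_left (U_mul_exp_stirlingCorrection_lt hp0 hp1 hkp hk) hS
      _ = _ := by rw [sqrt_one_sub_div_mul_div_eq hk' hkn' hkp, hS_def]; ring

theorem binomial_tail_upper_bound_asymptotic
    (n k : ℕ) (hn : 0 < n) (hk : 0 < k) (p : ℝ) (hp0 : 0 < p) (hp1 : p < 1)
    (hkp : (k : ℝ) < p * n) :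
    B n k p < Bup n k p ∧
    Bup n k p < Real.sqrt (1 - (k : ℝ) / n) * p /
        (Real.sqrt (2 * Real.pi * ((k : ℝ) / n)) * (p - (k : ℝ) / n)) *
        Real.exp (-(n * D ((k : ℝ) / n) p)) :=
  binomial_tail_upper_bound_asymptotic_general n k hk p hp1 hkp
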